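/- Let an infinite run (N = ∞) of the continued fraction algorithm on input z ∈ ℂ be given, and let p, q ∈ 𝒪 with q ≠ 0 and z ≠ p/q. Then there exists a smallest index n ≥ 0 such that |q_{n+1}| ≥ √(|q|·μ/(|q·z − p|·(1 − ε²))), and for this n there exist a, b ∈ 𝒪 with |b| < 2·√(|q·(q·z − p)|·μ/(1 − ε²)) such that b_n·p = a·p_n + b·p_{n−1} and b_n·q = a·q_n + b·q_{n−1}. In particular, if |q·(q·z − p)| ≤ (1 − ε²)/(4·μ), then p·q_n = q·p_n. -/

import Mathlib

noncomputable section

namespace CFNE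

/-- τ = (Δ + i·√|Δ|)/2. -/
def tau (Δ : ℤ) : ℂ := ((Δ : ℂ) + Complex.I * (Real.sqrt |(Δ : ℝ)|)) / 2

/-- The imaginary quadratic order 𝒪 = ℤ[τ] of discriminant Δ, as a subring of ℂ. -/
def O (Δ : ℤ) : Subring ℂ := Subring.closure {tau Δ}

/-- A (nonzero or zero) ideal of 𝒪, presented as a subset of ℂ. -/
structure IdealS (Δ : ℤ) where
  carrier : Set ℂ
  subset : carrier ⊆ (O Δ : Set ℂ)
  zero_mem : (0 : ℂ) ∈ carrier
  add_mem : ∀ x ∈ carrier, ∀ y ∈ carrier, x + y ∈ carrier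
  neg_mem : ∀ x ∈ carrier, -x ∈ carrier
  smul_mem : ∀ r ∈ (O Δ : Set ℂ), ∀ x ∈ carrier, r * x ∈ carrier

/-- The ideal as an additive subgroup of ℂ. -/
def IdealS.toAddSubgroup {Δ : ℤ} (I : IdealS Δ) : AddSubgroup ℂ where
  carrier := I.carrier
  zero_mem' := I.zero_mem
  add_mem' := fun hx hy => I.add_mem _ hx _ hy
  neg_mem' := fun hx => I.neg_mem _ hx

/-- The norm of an ideal: the index [𝒪 : 𝔟]. -/
def IdealS.norm {Δ : ℤ} (I : IdealS Δ) : ℕ :=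
  I.toAddSubgroup.relIndex (O Δ).toAddSubgroup

/-- The ideal is nonzero. -/
def IdealS.Nonzero {Δ : ℤ} (I : IdealS Δ) : Prop := ∃ x ∈ I.carrier, x ≠ 0

/-- Two nonzero ideals lie in the same class if x·𝔞 = y·𝔟 for some nonzero x, y ∈ 𝒪. -/
def SameClass {Δ : ℤ} (I J : IdealS Δ) : Prop :=
  ∃ x ∈ (O Δ : Set ℂ), ∃ y ∈ (O Δ : Set ℂ), x ≠ 0 ∧ y ≠ 0 ∧
    (fun t => x * t) '' I.carrier = (fun t => y * t) '' J.carrier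

/-- A reduced ideal: a nonzero ideal of minimal norm in its ideal class. -/
def IsReduced {Δ : ℤ} (I : IdealS Δ) : Prop :=
  I.Nonzero ∧ ∀ J : IdealS Δ, J.Nonzero → SameClass I J → I.norm ≤ J.norm

/-- The inverse fractional ideal 𝔟⁻¹ = {x ∈ ℂ : x·𝔟 ⊆ 𝒪}. -/
def invSet {Δ : ℤ} (I : IdealS Δ) : Set ℂ :=
  {x : ℂ | ∀ y ∈ I.carrier, x * y ∈ (O Δ : Set ℂ)}

/-- The fractional ideal a·𝔟 + b·𝔟⁻¹, as a subset of ℂ. -/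
def combSet {Δ : ℤ} (I : IdealS Δ) (a b : ℂ) : Set ℂ :=
  {u : ℂ | ∃ s ∈ I.carrier, ∃ t ∈ invSet I, u = a * s + b * t}

/-- The ideal x·𝒪 + y·𝒪 of 𝒪 generated by x and y, as a subset of ℂ. -/
def genSet (Δ : ℤ) (x y : ℂ) : Set ℂ :=
  {u : ℂ | ∃ s ∈ (O Δ : Set ℂ), ∃ t ∈ (O Δ : Set ℂ), u = x * s + y * t}

/-- The set is the carrier of a reduced ideal of 𝒪. -/
def IsReducedSet (Δ : ℤ) (S : Set ℂ) : Prop :=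
  ∃ J : IdealS Δ, IsReduced J ∧ J.carrier = S

/-- B is admissible with ε ∈ (0,1): B is a nonempty finite subset of 𝒪 ∖ {0}, and for every
reduced ideal 𝔟 with 𝔟 ∩ B ≠ ∅, the discs D(a/b, ε/|b|) over b ∈ 𝔟 ∩ B, a ∈ 𝔟⁻¹ with
a·𝔟 + b·𝔟⁻¹ reduced, cover ℂ. -/
def Admissible (Δ : ℤ) (B : Set ℂ) (ε : ℝ) : Prop :=
  B.Nonempty ∧ B.Finite ∧ B ⊆ (O Δ : Set ℂ) ∧ (0 : ℂ) ∉ B ∧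
  ∀ I : IdealS Δ, IsReduced I → (I.carrier ∩ B).Nonempty →
    ∀ z : ℂ, ∃ b ∈ I.carrier ∩ B, ∃ a ∈ invSet I,
      IsReducedSet Δ (combSet I a b) ∧ ‖z - a / b‖ ≤ ε / ‖b‖

/-- μ = max{|b| : b ∈ B}. -/
def mu (B : Set ℂ) : ℝ := sSup ((fun b : ℂ => ‖b‖) '' B)

/-- A run of the continued fraction algorithm of length N ∈ ℕ ∪ {∞} on input z. -/
structure Run (Δ : ℤ) (B : Set ℂ) (ε : ℝ) (z : ℂ) (N : ℕ∞) where
  a : ℤ → ℂ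
  b : ℤ → ℂ
  p : ℤ → ℂ
  q : ℤ → ℂ
  zs : ℤ → ℂ
  b_zero : b 0 = 1
  p_neg_one : p (-1) = 0
  q_neg_one : q (-1) = 1
  p_zero : p 0 = 1
  q_zero : q 0 = 0
  zs_zero : zs 0 = z
  ha : ∀ n : ℕ, 1 ≤ n → (n : ℕ∞) ≤ N → a n ∈ O Δ
  hb : ∀ n : ℕ, 1 ≤ n → (n : ℕ∞) ≤ N → b n ∈ B
  hne : ∀ n : ℕ, 1 ≤ n → (n : ℕ∞) ≤ N → b n * zs ((n : ℤ) - 1) - a n ≠ 0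
  hclose : ∀ n : ℕ, 1 ≤ n → (n : ℕ∞) ≤ N →
    ‖b n * zs ((n : ℤ) - 1) - a n‖ ≤ ε * ‖b ((n : ℤ) - 1)‖
  hp : ∀ n : ℕ, 1 ≤ n → (n : ℕ∞) ≤ N →
    p n = (a n * p ((n : ℤ) - 1) + b n * p ((n : ℤ) - 2)) / b ((n : ℤ) - 1)
  hq : ∀ n : ℕ, 1 ≤ n → (n : ℕ∞) ≤ N →
    q n = (a n * q ((n : ℤ) - 1) + b n * q ((n : ℤ) - 2)) / b ((n : ℤ) - 1)
  hz : ∀ n : ℕ, 1 ≤ n → (n : ℕ∞) ≤ N →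
    zs n = b ((n : ℤ) - 1) / (b n * zs ((n : ℤ) - 1) - a n)
  hpO : ∀ n : ℕ, 1 ≤ n → (n : ℕ∞) ≤ N → p n ∈ O Δ
  hqO : ∀ n : ℕ, 1 ≤ n → (n : ℕ∞) ≤ N → q n ∈ O Δ
  hred : ∀ n : ℕ, 1 ≤ n → (n : ℕ∞) ≤ N → IsReducedSet Δ (genSet Δ (p n) (q n))

/-!
Write `eₙ = qₙ z - pₙ`. The recursion gives `eₙ₊₁ zₙ₊₁ = -eₙ` with `ε |zₙ₊₁| ≥ 1`, so
`|eₙ| ≤ εⁿ`, and the determinant identity `pₙ qₙ₋₁ - pₙ₋₁ qₙ = (-1)ⁿ bₙ` turns into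
`qₙ₊₁ eₙ - qₙ eₙ₊₁ = ±bₙ₊₁`. Since `1 ≤ |bₙ₊₁| ≤ μ`, this forces `|qₙ| → ∞` and
`|qₙ₊₁ eₙ| ≤ μ / (1 - ε²)`. By Cramer's rule, `bₙ (p, q) = a (pₙ, qₙ) + b (pₙ₋₁, qₙ₋₁)` with
`b = ±(q pₙ - p qₙ) = ±(qₙ (q z - p) - q eₙ) ∈ 𝒪`. At the first `n` with `|qₙ₊₁| ≥ T` both
terms are at most `T |q z - p|`, the first one strictly, and `T` is chosen to make this
`√(|q (q z - p)| μ / (1 - ε²))`. When that is at most `1/2` we get `b = 0`, because nonzero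
elements of `𝒪` have norm at least `1`.
-/

lemma tau_sq_mul_four {Δ : ℤ} (hΔneg : Δ < 0) :
    4 * tau Δ ^ 2 = 4 * Δ * tau Δ - Δ * (Δ - 1) := by
  have hs : ((Real.sqrt |(Δ : ℝ)| : ℝ) : ℂ) ^ 2 = -Δ := by
    rw [← Complex.ofReal_pow, Real.sq_sqrt (abs_nonneg _), abs_of_neg (by exact_mod_cast hΔneg)]
    push_cast; ring
  unfold tau
  linear_combination (((Real.sqrt |(Δ : ℝ)| : ℝ) : ℂ) ^ 2) * Complex.I_sq - hs

lemma four_dvd_mul_sub_one {Δ : ℤ} (hΔmod : Δ % 4 = 0 ∨ Δ % 4 = 1) : 4 ∣ Δ * (Δ - 1) := by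
  rcases hΔmod with h | h
  · exact (Int.dvd_of_emod_eq_zero h).mul_right _
  · exact (Int.dvd_of_emod_eq_zero (by omega)).mul_left _

lemma exists_eq_add_mul_tau_of_mem_O {Δ : ℤ} (hΔneg : Δ < 0) (hΔmod : Δ % 4 = 0 ∨ Δ % 4 = 1)
    {w : ℂ} (hw : w ∈ O Δ) : ∃ x y : ℤ, w = x + y * tau Δ := by
  obtain ⟨k, hk⟩ := four_dvd_mul_sub_one hΔmod
  have hτ : tau Δ ^ 2 = Δ * tau Δ - k := by
    have hk' : (Δ : ℂ) * (Δ - 1) = 4 * k := by exact_mod_cast hk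
    linear_combination (tau_sq_mul_four hΔneg - hk') / 4
  induction hw using Subring.closure_induction with
  | mem t ht => exact ⟨0, 1, by rw [Set.mem_singleton_iff.1 ht]; push_cast; ring⟩
  | zero => exact ⟨0, 0, by push_cast; ring⟩
  | one => exact ⟨1, 0, by push_cast; ring⟩
  | add _ _ _ _ h₁ h₂ =>
    obtain ⟨x₁, y₁, rfl⟩ := h₁
    obtain ⟨x₂, y₂, rfl⟩ := h₂
    exact ⟨x₁ + x₂, y₁ + y₂, by push_cast; ring⟩
  | neg _ _ h =>
    obtain ⟨x, y, rfl⟩ := h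
    exact ⟨-x, -y, by push_cast; ring⟩
  | mul _ _ _ _ h₁ h₂ =>
    obtain ⟨x₁, y₁, rfl⟩ := h₁
    obtain ⟨x₂, y₂, rfl⟩ := h₂
    exact ⟨x₁ * x₂ - k * y₁ * y₂, x₁ * y₂ + y₁ * x₂ + Δ * y₁ * y₂, by
      push_cast; linear_combination (y₁ : ℂ) * y₂ * hτ⟩

lemma normSq_add_mul_tau_mul_four {Δ : ℤ} (hΔneg : Δ < 0) (x y : ℤ) :
    4 * Complex.normSq (x + y * tau Δ) = (2 * x + Δ * y) ^ 2 - Δ * y ^ 2 := by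
  have hs : Real.sqrt |(Δ : ℝ)| ^ 2 = -Δ := by
    rw [Real.sq_sqrt (abs_nonneg _), abs_of_neg (by exact_mod_cast hΔneg)]
  simp only [Complex.normSq_apply, tau, Complex.add_re, Complex.add_im, Complex.mul_re,
    Complex.mul_im, Complex.div_ofNat_re, Complex.div_ofNat_im, Complex.intCast_re, Complex.intCast_im,
    Complex.I_re, Complex.I_im, Complex.ofReal_re, Complex.ofReal_im]
  linear_combination (y : ℝ) ^ 2 * hs

lemma one_le_norm_of_mem_O {Δ : ℤ} (hΔneg : Δ < 0) (hΔmod : Δ % 4 = 0 ∨ Δ % 4 = 1)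
    {w : ℂ} (hw : w ∈ O Δ) (hw0 : w ≠ 0) : 1 ≤ ‖w‖ := by
  obtain ⟨x, y, rfl⟩ := exists_eq_add_mul_tau_of_mem_O hΔneg hΔmod hw
  obtain ⟨k, hk⟩ := four_dvd_mul_sub_one hΔmod
  have hN : Complex.normSq (x + y * tau Δ) = ((x ^ 2 + Δ * x * y + k * y ^ 2 : ℤ) : ℝ) := by
    have h4 := normSq_add_mul_tau_mul_four hΔneg x y
    have hk' : (Δ : ℝ) * (Δ - 1) = 4 * k := by exact_mod_cast hk
    push_cast
    linear_combination h4 / 4 + (y : ℝ) ^ 2 * hk' / 4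
  have hpos : 0 < x ^ 2 + Δ * x * y + k * y ^ 2 := by
    exact_mod_cast hN ▸ Complex.normSq_pos.2 hw0
  have h1 : 1 ≤ ‖(x : ℂ) + y * tau Δ‖ ^ 2 := by
    rw [Complex.sq_norm, hN]
    exact_mod_cast hpos
  exact (one_le_sq_iff₀ (norm_nonneg _)).1 h1

namespace Run

variable {Δ : ℤ} {B : Set ℂ} {ε : ℝ} {z : ℂ}

def err {N : ℕ∞} (R : Run Δ B ε z N) (n : ℤ) : ℂ := R.q n * z - R.p n

variable (R : Run Δ B ε z ⊤)

lemma b_succ_mem (n : ℕ) : R.b (n + 1) ∈ B := by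
  simpa using R.hb (n + 1) (by omega) le_top

lemma b_ne_zero (hB0 : (0 : ℂ) ∉ B) (n : ℕ) : R.b n ≠ 0 := by
  cases n with
  | zero => simp [R.b_zero]
  | succ n =>
    push_cast
    exact ne_of_mem_of_not_mem (R.b_succ_mem n) hB0

lemma one_le_norm_b (hΔneg : Δ < 0) (hΔmod : Δ % 4 = 0 ∨ Δ % 4 = 1)
    (hBO : B ⊆ O Δ) (hB0 : (0 : ℂ) ∉ B) (n : ℕ) : 1 ≤ ‖R.b n‖ := by
  cases n with
  | zero => simp [R.b_zero]
  | succ n =>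
    push_cast
    exact one_le_norm_of_mem_O hΔneg hΔmod (hBO (R.b_succ_mem n)) (R.b_ne_zero hB0 (n + 1))

lemma norm_b_succ_le_mu (hB : BddAbove ((fun b : ℂ => ‖b‖) '' B)) (n : ℕ) :
    ‖R.b (n + 1)‖ ≤ mu B :=
  le_csSup hB (Set.mem_image_of_mem _ (R.b_succ_mem n))

lemma p_mem_O {k : ℤ} (hk : -1 ≤ k) : R.p k ∈ O Δ := by
  rcases (by omega : k = -1 ∨ 0 ≤ k) with rfl | hk0
  · rw [R.p_neg_one]; exact zero_mem _
  lift k to ℕ using hk0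
  cases k with
  | zero => rw [Nat.cast_zero, R.p_zero]; exact one_mem _
  | succ n => exact R.hpO (n + 1) (by omega) le_top

lemma q_mem_O {k : ℤ} (hk : -1 ≤ k) : R.q k ∈ O Δ := by
  rcases (by omega : k = -1 ∨ 0 ≤ k) with rfl | hk0
  · rw [R.q_neg_one]; exact one_mem _
  lift k to ℕ using hk0
  cases k with
  | zero => rw [Nat.cast_zero, R.q_zero]; exact zero_mem _
  | succ n => exact R.hqO (n + 1) (by omega) le_top

lemma p_succ (hB0 : (0 : ℂ) ∉ B) (n : ℕ) :
    R.b n * R.p (n + 1) = R.a (n + 1) * R.p n + R.b (n + 1) * R.p (n - 1) := by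
  have h := R.hp (n + 1) (by omega) le_top
  rw [Nat.cast_succ, add_sub_cancel_right, show (n : ℤ) + 1 - 2 = n - 1 by ring,
    eq_div_iff (R.b_ne_zero hB0 n)] at h
  linear_combination h

lemma q_succ (hB0 : (0 : ℂ) ∉ B) (n : ℕ) :
    R.b n * R.q (n + 1) = R.a (n + 1) * R.q n + R.b (n + 1) * R.q (n - 1) := by
  have h := R.hq (n + 1) (by omega) le_top
  rw [Nat.cast_succ, add_sub_cancel_right, show (n : ℤ) + 1 - 2 = n - 1 by ring,
    eq_div_iff (R.b_ne_zero hB0 n)] at h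
  linear_combination h

lemma err_succ (hB0 : (0 : ℂ) ∉ B) (n : ℕ) :
    R.b n * R.err (n + 1) = R.a (n + 1) * R.err n + R.b (n + 1) * R.err (n - 1) := by
  unfold err
  linear_combination z * R.q_succ hB0 n - R.p_succ hB0 n

lemma zs_succ_mul (n : ℕ) : R.zs (n + 1) * (R.b (n + 1) * R.zs n - R.a (n + 1)) = R.b n := by
  have hne := R.hne (n + 1) (by omega) le_top
  have h := R.hz (n + 1) (by omega) le_top
  rw [Nat.cast_succ, add_sub_cancel_right] at hne h
  rw [h, div_mul_cancel₀ _ hne]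

lemma one_le_mul_norm_zs_succ (hB0 : (0 : ℂ) ∉ B) (n : ℕ) : 1 ≤ ε * ‖R.zs (n + 1)‖ := by
  have hclose := R.hclose (n + 1) (by omega) le_top
  rw [Nat.cast_succ, add_sub_cancel_right] at hclose
  have hb : 0 < ‖R.b n‖ := norm_pos_iff.2 (R.b_ne_zero hB0 n)
  have h : ‖R.b n‖ ≤ ε * ‖R.zs (n + 1)‖ * ‖R.b n‖ := by
    calc ‖R.b n‖ = ‖R.zs (n + 1)‖ * ‖R.b (n + 1) * R.zs n - R.a (n + 1)‖ := by
          rw [← norm_mul, R.zs_succ_mul]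
      _ ≤ ‖R.zs (n + 1)‖ * (ε * ‖R.b n‖) := by gcongr
      _ = ε * ‖R.zs (n + 1)‖ * ‖R.b n‖ := by ring
  exact le_of_mul_le_mul_right (by rwa [one_mul]) hb

lemma det (hB0 : (0 : ℂ) ∉ B) (n : ℕ) :
    R.p n * R.q (n - 1) - R.p (n - 1) * R.q n = (-1) ^ n * R.b n := by
  induction n with
  | zero => simp [R.p_zero, R.q_zero, R.p_neg_one, R.q_neg_one, R.b_zero]
  | succ n ih =>
    push_cast
    rw [add_sub_cancel_right]
    apply mul_left_cancel₀ (R.b_ne_zero hB0 n)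
    linear_combination R.q n * R.p_succ hB0 n - R.p n * R.q_succ hB0 n - R.b (n + 1) * ih

lemma err_mul_zs_add_err (hB0 : (0 : ℂ) ∉ B) (n : ℕ) : R.err n * R.zs n + R.err (n - 1) = 0 := by
  induction n with
  | zero => simp [err, R.p_zero, R.q_zero, R.p_neg_one, R.q_neg_one, R.zs_zero]
  | succ n ih =>
    push_cast
    rw [add_sub_cancel_right]
    apply mul_left_cancel₀ (R.b_ne_zero hB0 n)
    linear_combination R.zs (n + 1) * R.err_succ hB0 n + R.b (n + 1) * R.zs (n + 1) * ih
      - R.err n * R.zs_succ_mul n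

lemma norm_err_succ_le (hB0 : (0 : ℂ) ∉ B) (n : ℕ) : ‖R.err (n + 1)‖ ≤ ε * ‖R.err n‖ := by
  have h : R.err n = -(R.err (n + 1) * R.zs (n + 1)) := by
    have h₁ := R.err_mul_zs_add_err hB0 (n + 1)
    push_cast at h₁
    rw [add_sub_cancel_right] at h₁
    linear_combination h₁
  rw [h, norm_neg, norm_mul]
  nlinarith [R.one_le_mul_norm_zs_succ hB0 n, norm_nonneg (R.err (n + 1))]

lemma norm_err_le_pow (hB0 : (0 : ℂ) ∉ B) (hε : 0 ≤ ε) (n : ℕ) : ‖R.err n‖ ≤ ε ^ n := by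
  induction n with
  | zero => simp [err, R.p_zero, R.q_zero]
  | succ n ih =>
    calc ‖R.err ((n + 1 : ℕ) : ℤ)‖ ≤ ε * ‖R.err n‖ := by
          simpa using R.norm_err_succ_le hB0 n
      _ ≤ ε * ε ^ n := by gcongr
      _ = ε ^ (n + 1) := by ring

lemma q_succ_mul_err_sub (hB0 : (0 : ℂ) ∉ B) (n : ℕ) :
    R.q (n + 1) * R.err n - R.q n * R.err (n + 1) = (-1) ^ (n + 1) * R.b (n + 1) := by
  have h := R.det hB0 (n + 1)
  push_cast at h
  rw [add_sub_cancel_right] at h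
  unfold err
  linear_combination h

lemma one_le_norm_q_add_mul_pow (hΔneg : Δ < 0) (hΔmod : Δ % 4 = 0 ∨ Δ % 4 = 1)
    (hBO : B ⊆ O Δ) (hB0 : (0 : ℂ) ∉ B) (hε : 0 ≤ ε) (n : ℕ) :
    1 ≤ (‖R.q (n + 1)‖ + ε * ‖R.q n‖) * ε ^ n := by
  have hpow := R.norm_err_le_pow hB0 hε n
  have hsucc : ‖R.err (n + 1)‖ ≤ ε * ε ^ n :=
    (R.norm_err_succ_le hB0 n).trans (mul_le_mul_of_nonneg_left hpow hε)
  calc 1 ≤ ‖R.b (n + 1)‖ := by exact_mod_cast R.one_le_norm_b hΔneg hΔmod hBO hB0 (n + 1)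
    _ = ‖R.q (n + 1) * R.err n - R.q n * R.err (n + 1)‖ := by
        rw [R.q_succ_mul_err_sub hB0, norm_mul, norm_pow, norm_neg, norm_one, one_pow, one_mul]
    _ ≤ ‖R.q (n + 1)‖ * ‖R.err n‖ + ‖R.q n‖ * ‖R.err (n + 1)‖ := by
        rw [← norm_mul, ← norm_mul]; exact norm_sub_le _ _
    _ ≤ ‖R.q (n + 1)‖ * ε ^ n + ‖R.q n‖ * (ε * ε ^ n) := by gcongr
    _ = (‖R.q (n + 1)‖ + ε * ‖R.q n‖) * ε ^ n := by ring

lemma norm_q_lt_of_forall_lt {T : ℝ} (hT : 0 < T) {n : ℕ} (h : ∀ m < n, ‖R.q (m + 1)‖ < T) :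
    ‖R.q n‖ < T := by
  cases n with
  | zero => simpa [R.q_zero] using hT
  | succ n => exact_mod_cast h n n.lt_succ_self

lemma exists_le_norm_q_succ (hΔneg : Δ < 0) (hΔmod : Δ % 4 = 0 ∨ Δ % 4 = 1)
    (hBO : B ⊆ O Δ) (hB0 : (0 : ℂ) ∉ B) (hε0 : 0 ≤ ε) (hε1 : ε < 1) (T : ℝ) :
    ∃ m : ℕ, T ≤ ‖R.q (m + 1)‖ := by
  by_contra! hlt
  have hT : 0 < T := (norm_nonneg _).trans_lt (hlt 0)
  have hpos : 0 < T * (1 + ε) := by positivity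
  obtain ⟨n, hn⟩ := exists_pow_lt_of_lt_one (inv_pos.2 hpos) hε1
  have hqn : ‖R.q n‖ < T := R.norm_q_lt_of_forall_lt hT fun m _ => hlt m
  have hsum : ‖R.q (n + 1)‖ + ε * ‖R.q n‖ ≤ T * (1 + ε) := by
    linarith [hlt n, mul_le_mul_of_nonneg_left hqn.le hε0]
  refine lt_irrefl (1 : ℝ) ?_
  calc 1 ≤ (‖R.q (n + 1)‖ + ε * ‖R.q n‖) * ε ^ n :=
        R.one_le_norm_q_add_mul_pow hΔneg hΔmod hBO hB0 hε0 n
    _ ≤ T * (1 + ε) * ε ^ n := by gcongr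
    _ < T * (1 + ε) * (T * (1 + ε))⁻¹ := by gcongr
    _ = 1 := mul_inv_cancel₀ hpos.ne'

lemma norm_q_mul_norm_err_succ_le (hB : BddAbove ((fun b : ℂ => ‖b‖) '' B))
    (hB0 : (0 : ℂ) ∉ B) (hε : 0 ≤ ε) (n : ℕ) :
    ‖R.q (n + 1 + 1)‖ * ‖R.err (n + 1)‖ ≤ mu B + ε ^ 2 * (‖R.q (n + 1)‖ * ‖R.err n‖) := by
  have hcross := R.q_succ_mul_err_sub hB0 (n + 1)
  have hb := R.norm_b_succ_le_mu hB (n + 1)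
  have h₁ := R.norm_err_succ_le hB0 (n + 1)
  push_cast at hcross hb h₁
  have herr : ‖R.err (n + 1 + 1)‖ ≤ ε ^ 2 * ‖R.err n‖ :=
    h₁.trans (by rw [sq, mul_assoc]; exact mul_le_mul_of_nonneg_left (R.norm_err_succ_le hB0 n) hε)
  calc ‖R.q (n + 1 + 1)‖ * ‖R.err (n + 1)‖
      = ‖(-1) ^ (n + 1 + 1) * R.b (n + 1 + 1) + R.q (n + 1) * R.err (n + 1 + 1)‖ := by
        rw [← norm_mul, ← hcross, sub_add_cancel]
    _ ≤ ‖R.b (n + 1 + 1)‖ + ‖R.q (n + 1)‖ * ‖R.err (n + 1 + 1)‖ := by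
        refine (norm_add_le _ _).trans_eq ?_
        rw [norm_mul, norm_mul, norm_pow, norm_neg, norm_one, one_pow, one_mul]
    _ ≤ mu B + ε ^ 2 * (‖R.q (n + 1)‖ * ‖R.err n‖) := by
        rw [mul_left_comm]
        gcongr

lemma norm_q_succ_mul_norm_err_le (hB : BddAbove ((fun b : ℂ => ‖b‖) '' B))
    (hB0 : (0 : ℂ) ∉ B) (hε0 : 0 ≤ ε) (hε1 : ε < 1) (n : ℕ) :
    ‖R.q (n + 1)‖ * ‖R.err n‖ ≤ mu B / (1 - ε ^ 2) := by
  have hδ : 0 < 1 - ε ^ 2 := by nlinarith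
  have hmu : 0 ≤ mu B := (norm_nonneg _).trans (R.norm_b_succ_le_mu hB 0)
  induction n with
  | zero =>
    have hq1 : R.q 1 = R.b 1 := by
      simpa [R.b_zero, R.q_zero, R.q_neg_one] using R.q_succ hB0 0
    simpa [err, R.p_zero, R.q_zero, hq1] using
      (R.norm_b_succ_le_mu hB 0).trans (le_div_self hmu hδ (by nlinarith))
  | succ n ih =>
    push_cast
    calc ‖R.q (n + 1 + 1)‖ * ‖R.err (n + 1)‖
        ≤ mu B + ε ^ 2 * (‖R.q (n + 1)‖ * ‖R.err n‖) :=
          R.norm_q_mul_norm_err_succ_le hB hB0 hε0 n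
      _ ≤ mu B + ε ^ 2 * (mu B / (1 - ε ^ 2)) := by gcongr
      _ = mu B / (1 - ε ^ 2) := by field_simp; ring

lemma exists_mem_O_combination (hB0 : (0 : ℂ) ∉ B) {p q : ℂ} (hp : p ∈ O Δ) (hq : q ∈ O Δ)
    (n : ℕ) : ∃ a ∈ O Δ, ∃ b ∈ O Δ, ‖b‖ ≤ ‖q‖ * ‖R.err n‖ + ‖R.q n‖ * ‖q * z - p‖ ∧
      R.b n * p = a * R.p n + b * R.p (n - 1) ∧ R.b n * q = a * R.q n + b * R.q (n - 1) := by
  have hn : (-1 : ℤ) ≤ n := by omega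
  have hn' : (-1 : ℤ) ≤ n - 1 := by omega
  have hdet := R.det hB0 n
  have hsign : ((-1 : ℂ) ^ n) ^ 2 = 1 := by rw [← pow_mul, mul_comm, pow_mul, neg_one_sq, one_pow]
  refine ⟨(-1) ^ n * (p * R.q (n - 1) - q * R.p (n - 1)),
    mul_mem (pow_mem (neg_mem (one_mem _)) n)
      (sub_mem (mul_mem hp (R.q_mem_O hn')) (mul_mem hq (R.p_mem_O hn'))),
    (-1) ^ n * (q * R.p n - p * R.q n),
    mul_mem (pow_mem (neg_mem (one_mem _)) n)
      (sub_mem (mul_mem hq (R.p_mem_O hn)) (mul_mem hp (R.q_mem_O hn))), ?_, ?_, ?_⟩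
  · rw [norm_mul, norm_pow, norm_neg, norm_one, one_pow, one_mul,
      show q * R.p n - p * R.q n = R.q n * (q * z - p) - q * R.err n by unfold err; ring]
    refine (norm_sub_le _ _).trans_eq ?_
    rw [norm_mul, norm_mul, add_comm]
  · linear_combination -(-1) ^ n * p * hdet - R.b n * p * hsign
  · linear_combination -(-1) ^ n * q * hdet - R.b n * q * hsign

end Run

lemma mul_add_mul_lt_two_sqrt {Q E e X Y μ δ : ℝ} (hQ : 0 < Q) (hE : 0 < E) (hμ : 0 < μ)
    (hδ : 0 < δ) (he : 0 ≤ e) (hX : √(Q * μ / (E * δ)) ≤ X) (hXe : X * e ≤ μ / δ)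
    (hY : Y < √(Q * μ / (E * δ))) : Q * e + Y * E < 2 * √(Q * E * μ / δ) := by
  set T := √(Q * μ / (E * δ))
  have hT : 0 < T := Real.sqrt_pos.2 (by positivity)
  have hT2 : T ^ 2 * E = Q * μ / δ := by
    rw [Real.sq_sqrt (by positivity)]; field_simp
  have hTE : √(Q * E * μ / δ) = T * E := by
    rw [Real.sqrt_eq_iff_mul_self_eq_of_pos (by positivity)]
    linear_combination E * hT2
  have hQe : Q * e ≤ T * E := by
    refine le_of_mul_le_mul_left ?_ hT
    calc T * (Q * e) ≤ X * (Q * e) := mul_le_mul_of_nonneg_right hX (mul_nonneg hQ.le he)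
      _ = Q * (X * e) := by ring
      _ ≤ Q * (μ / δ) := by gcongr
      _ = T * (T * E) := by rw [← mul_div_assoc, ← hT2]; ring
  rw [hTE]
  nlinarith

lemma sqrt_mul_div_le_half {x μ δ : ℝ} (hμ : 0 < μ) (hδ : 0 < δ) (h : x ≤ δ / (4 * μ)) :
    √(x * μ / δ) ≤ 1 / 2 := by
  rw [Real.sqrt_le_left (by norm_num), div_le_iff₀ hδ]
  rw [le_div_iff₀ (by positivity)] at h
  nlinarith

theorem stmt8 (Δ : ℤ) (hΔneg : Δ < 0) (hΔmod : Δ % 4 = 0 ∨ Δ % 4 = 1)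
    (B : Set ℂ) (ε : ℝ) (hε0 : 0 < ε) (hε1 : ε < 1) (hadm : Admissible Δ B ε)
    (z : ℂ) (R : Run Δ B ε z ⊤)
    (p q : ℂ) (hp : p ∈ O Δ) (hq : q ∈ O Δ) (hq0 : q ≠ 0) (hzpq : z ≠ p / q) :
    ∃ n : ℕ,
      Real.sqrt (‖q‖ * mu B / (‖q * z - p‖ * (1 - ε ^ 2))) ≤
        ‖R.q ((n : ℤ) + 1)‖ ∧
      (∀ m : ℕ,
        Real.sqrt (‖q‖ * mu B / (‖q * z - p‖ * (1 - ε ^ 2))) ≤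
          ‖R.q ((m : ℤ) + 1)‖ → n ≤ m) ∧
      ∃ a ∈ O Δ, ∃ b ∈ O Δ,
        ‖b‖ < 2 * Real.sqrt (‖q * (q * z - p)‖ * mu B / (1 - ε ^ 2)) ∧
        R.b n * p = a * R.p n + b * R.p ((n : ℤ) - 1) ∧
        R.b n * q = a * R.q n + b * R.q ((n : ℤ) - 1) ∧
        (‖q * (q * z - p)‖ ≤ (1 - ε ^ 2) / (4 * mu B) →
          p * R.q n = q * R.p n) := by
  obtain ⟨-, hfin, hBO, hB0, -⟩ := hadm
  have hB : BddAbove ((fun b : ℂ => ‖b‖) '' B) := (hfin.image _).bddAbove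
  have hδ : 0 < 1 - ε ^ 2 := by nlinarith
  have hμ : 0 < mu B := zero_lt_one.trans_le <|
    (R.one_le_norm_b hΔneg hΔmod hBO hB0 1).trans (by exact_mod_cast R.norm_b_succ_le_mu hB 0)
  have hE : 0 < ‖q * z - p‖ :=
    norm_pos_iff.2 (sub_ne_zero.2 fun h => hzpq (by rw [eq_div_iff hq0, ← h, mul_comm]))
  set T := √(‖q‖ * mu B / (‖q * z - p‖ * (1 - ε ^ 2)))
  have hT : 0 < T := Real.sqrt_pos.2 (by have := norm_pos_iff.2 hq0; positivity)
  have hex := R.exists_le_norm_q_succ hΔneg hΔmod hBO hB0 hε0.le hε1 T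
  refine ⟨Nat.find hex, Nat.find_spec hex, fun m hm => Nat.find_min' hex hm, ?_⟩
  set n := Nat.find hex
  obtain ⟨a, ha, b, hb, hb_le, hpn, hqn⟩ := R.exists_mem_O_combination hB0 hp hq n
  have hb_lt : ‖b‖ < 2 * √(‖q * (q * z - p)‖ * mu B / (1 - ε ^ 2)) := by
    rw [norm_mul]
    refine hb_le.trans_lt (mul_add_mul_lt_two_sqrt (norm_pos_iff.2 hq0) hE hμ hδ (norm_nonneg _)
      (Nat.find_spec hex) (R.norm_q_succ_mul_norm_err_le hB hB0 hε0.le hε1 n) ?_)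
    exact R.norm_q_lt_of_forall_lt hT fun m hm => not_le.1 (Nat.find_min hex hm)
  refine ⟨a, ha, b, hb, hb_lt, hpn, hqn, fun hsmall => ?_⟩
  have hb0 : b = 0 := by
    by_contra hb0
    linarith [one_le_norm_of_mem_O hΔneg hΔmod hb hb0, sqrt_mul_div_le_half hμ hδ hsmall]
  apply mul_left_cancel₀ (R.b_ne_zero hB0 n)
  rw [hb0] at hpn hqn
  linear_combination R.q n * hpn - R.p n * hqn

end CFNE
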